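/- arXiv:0710.5097 — 4 statements merged into one kernel-verified Lean document; each statement's English description precedes it below -/
import Mathlib

section
/- Let R → S be a G-Galois extension of commutative rings for a finite group G (i.e., S^G = R and the map h: S ⊗_R S → ∏_{g∈G} S, x⊗y ↦ (x·g(y))_g is an isomorphism). Then S is a separable R-algebra: the multiplication map μ: S ⊗_R S → S admits an S-bimodule section σ with μ∘σ = id_S. -/
open scoped TensorProduct

/-- The canonical map `h : S ⊗[R] S → ∏_{g ∈ G} S`, `x ⊗ y ↦ (x · g(y))_g`,
for a group `G` acting on the `R`-algebra `S` via `ρ`. -/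
noncomputable def galoisMap (R S G : Type*) [CommRing R] [CommRing S] [Algebra R S]
    [Group G] (ρ : G →* (S ≃ₐ[R] S)) : TensorProduct R S S →ₐ[R] (G → S) :=
  Pi.algHom _ _ fun g => Algebra.TensorProduct.productMap (AlgHom.id R S) (ρ g).toAlgHom

/-- `S/R` is a `G`-Galois extension: the `G`-fixed points of `S` are exactly the image of
`R`, and the map `h : S ⊗[R] S → ∏_{g ∈ G} S` is bijective. -/
structure IsGaloisExtension (R S G : Type*) [CommRing R] [CommRing S] [Algebra R S]
    [Group G] (ρ : G →* (S ≃ₐ[R] S)) : Prop where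
  fixed : ∀ s : S, (∀ g : G, ρ g s = s) → ∃ r : R, algebraMap R S r = s
  bijective : Function.Bijective (galoisMap R S G ρ)

/-- a `G`-Galois extension `S/R` is separable: there is a separability
idempotent `e ∈ S ⊗[R] S`, i.e. the multiplication map has an `S`-bimodule section. -/
theorem galois_is_separable (R S G : Type*) [CommRing R] [CommRing S] [Algebra R S]
    [Group G] [Finite G] (ρ : G →* (S ≃ₐ[R] S))
    (hGal : IsGaloisExtension R S G ρ) :
    ∃ e : TensorProduct R S S, e * e = e ∧ LinearMap.mul' R S e = 1 ∧
      ∀ s : S, (s ⊗ₜ[R] (1 : S)) * e = ((1 : S) ⊗ₜ[R] s) * e := by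
  classical
  set h := galoisMap R S G ρ with hh
  have hmul1 : ∀ x : TensorProduct R S S, LinearMap.mul' R S x = h x 1 := by
    intro x
    induction x using TensorProduct.induction_on with
    | zero => simp
    | tmul a b =>
        simp [hh, galoisMap, Algebra.TensorProduct.productMap_apply_tmul]
    | add x y hx hy => simp [map_add, hx, hy]
  obtain ⟨e, he⟩ := hGal.bijective.surjective (fun g => if g = 1 then 1 else 0)
  refine ⟨e, ?_, ?_, ?_⟩
  · apply hGal.bijective.injective
    rw [map_mul, he]
    funext g
    by_cases hg : g = 1 <;> simp [hg]
  · rw [hmul1, he]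
    simp
  · intro s
    apply hGal.bijective.injective
    rw [map_mul, map_mul, he]
    funext g
    by_cases hg : g = 1 <;>
      simp [hh, galoisMap, Algebra.TensorProduct.productMap_apply_tmul, hg]
end

section
/- Let R → S be a G-Galois extension of commutative rings with G finite, and let T be a commutative R-algebra. Then T → T ⊗_R S is a G-Galois extension: (T ⊗_R S)^G = T and the map T ⊗_R S ⊗_T (T ⊗_R S) → ∏_{g∈G} (T ⊗_R S) induced by (x, y) ↦ (x·g(y))_g is an isomorphism. -/
open scoped TensorProduct

/-- The `G`-action on `T ⊗[R] S` induced by an action on the factor `S`. -/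
noncomputable def baseChangeAction (R S G T : Type*) [CommRing R] [CommRing S]
    [Algebra R S] [Group G] [CommRing T] [Algebra R T] (ρ : G →* (S ≃ₐ[R] S)) :
    G →* ((TensorProduct R T S) ≃ₐ[T] TensorProduct R T S) where
  toFun g := Algebra.TensorProduct.congr (AlgEquiv.refl (R := T) (A₁ := T)) (ρ g)
  map_one' := by
    apply AlgEquiv.ext
    intro x
    induction x with
    | zero => simp
    | tmul t s => simp [map_one]
    | add a b ha hb => simp_all [map_add]
  map_mul' g₁ g₂ := by
    apply AlgEquiv.ext
    intro x
    induction x with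
    | zero => simp
    | tmul t s => simp [map_mul]
    | add a b ha hb => simp_all [map_add]


section

variable {R S G : Type*} [CommRing R] [CommRing S] [Algebra R S] [Group G]

@[simp]
lemma galoisMap_tmul_apply (ρ : G →* (S ≃ₐ[R] S)) (a b : S) (g : G) :
    galoisMap R S G ρ (a ⊗ₜ[R] b) g = a * ρ g b := by
  simp [galoisMap]

section galoisTrace

variable [Fintype G] (ρ : G →* (S ≃ₐ[R] S))

def galoisTrace : S →ₗ[R] S := ∑ g, (ρ g).toLinearMap

@[simp]
lemma galoisTrace_apply (s : S) : galoisTrace ρ s = ∑ g, ρ g s := by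
  simp [galoisTrace]

@[simp]
lemma map_galoisTrace (g : G) (s : S) : ρ g (galoisTrace ρ s) = galoisTrace ρ s := by
  simp only [galoisTrace_apply, map_sum, ← AlgEquiv.mul_apply, ← map_mul]
  exact Fintype.sum_equiv (Equiv.mulLeft g) _ _ fun _ => rfl

lemma galoisTrace_mul_of_forall_map_eq (c : S) {a : S} (ha : ∀ g, ρ g a = a) :
    galoisTrace ρ (c * a) = galoisTrace ρ c * a := by
  simp [ha, Finset.sum_mul]

lemma exists_algebraMap_eq_of_forall_map_eq {c : S} (hc : galoisTrace ρ c = 1)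
    (htr : ∀ s, ∃ r : R, algebraMap R S r = galoisTrace ρ s) {a : S} (ha : ∀ g, ρ g a = a) :
    ∃ r : R, algebraMap R S r = a := by
  simpa [galoisTrace_mul_of_forall_map_eq ρ c ha, hc] using htr (c * a)

lemma sum_mul_galoisTrace_mul [DecidableEq G] {t : Finset (S × S)}
    (ht : ∀ g, ∑ i ∈ t, i.1 * ρ g i.2 = if g = 1 then 1 else 0) (s : S) :
    ∑ i ∈ t, i.1 * galoisTrace ρ (i.2 * s) = s := by
  simp only [galoisTrace_apply, map_mul, Finset.mul_sum, ← mul_assoc]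
  rw [Finset.sum_comm]
  simp [← Finset.sum_mul, ht]

end galoisTrace

section baseChange

variable (T : Type*) [CommRing T] [Algebra R T] (ρ : G →* (S ≃ₐ[R] S))

@[simp]
lemma baseChangeAction_tmul (g : G) (t : T) (s : S) :
    baseChangeAction R S G T ρ g (t ⊗ₜ s) = t ⊗ₜ ρ g s :=
  rfl

lemma galoisTrace_baseChangeAction_tmul [Fintype G] (t : T) (s : S) :
    galoisTrace (baseChangeAction R S G T ρ) (t ⊗ₜ s) = t ⊗ₜ galoisTrace ρ s := by
  simp [TensorProduct.tmul_sum]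

lemma galoisMap_baseChangeAction_distribBaseChange [Fintype G] [DecidableEq G]
    (x : T ⊗[R] (S ⊗[R] S)) :
    galoisMap T (T ⊗[R] S) G (baseChangeAction R S G T ρ)
        (TensorProduct.AlgebraTensorModule.distribBaseChange R T S S x) =
      Algebra.TensorProduct.piRight R T T (fun _ : G => S)
        ((galoisMap R S G ρ).toLinearMap.baseChange T x) := by
  induction x with
  | zero => simp
  | add x y hx hy => simp only [map_add, hx, hy]
  | tmul t y =>
    induction y with
    | zero => simp
    | add y z hy hz => simp only [TensorProduct.tmul_add, map_add, hy, hz]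
    | tmul a b =>
      funext g
      simp [TensorProduct.AlgebraTensorModule.distribBaseChange_tmul]

end baseChange

namespace IsGaloisExtension

variable {ρ : G →* (S ≃ₐ[R] S)} (T : Type*) [CommRing T] [Algebra R T]

lemma exists_algebraMap_eq_galoisTrace [Fintype G] (hGal : IsGaloisExtension R S G ρ) (s : S) :
    ∃ r : R, algebraMap R S r = galoisTrace ρ s :=
  hGal.fixed _ fun g => map_galoisTrace ρ g s

lemma exists_sum_mul_map_eq_ite [DecidableEq G] (hGal : IsGaloisExtension R S G ρ) :
    ∃ t : Finset (S × S), ∀ g, ∑ i ∈ t, i.1 * ρ g i.2 = if g = 1 then 1 else 0 := by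
  obtain ⟨u, hu⟩ := hGal.bijective.2 fun g => if g = 1 then 1 else 0
  obtain ⟨t, rfl⟩ := TensorProduct.exists_finset u
  exact ⟨t, fun g => by simpa [Finset.sum_apply] using congrFun hu g⟩

lemma exists_galoisTrace_eq_one [Fintype G] (hGal : IsGaloisExtension R S G ρ) :
    ∃ c : S, galoisTrace ρ c = 1 := by
  classical
  obtain ⟨t, ht⟩ := hGal.exists_sum_mul_map_eq_ite
  -- `I` contains the kernel of `algebraMap R S`, so Nakayama's `r` with `r • S = 0` lies in `I`.
  let I : Ideal R := (LinearMap.range (galoisTrace ρ)).comap (Algebra.linearMap R S)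
  choose tr htr using hGal.exists_algebraMap_eq_galoisTrace
  have expand (s : S) : ∑ i ∈ t, tr (i.2 * s) • i.1 = s := by
    simp_rw [Algebra.smul_def, htr, mul_comm _ (Prod.fst _)]
    exact sum_mul_galoisTrace_mul ρ ht s
  have mem_span (s : S) : s ∈ Submodule.span R (t.image Prod.fst : Set S) := by
    rw [← expand s]
    exact Submodule.sum_mem _ fun i hi => Submodule.smul_mem _ _
      (Submodule.subset_span (Finset.mem_coe.2 (Finset.mem_image_of_mem Prod.fst hi)))
  have mem_smul (s : S) : s ∈ I • (⊤ : Submodule R S) := by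
    rw [← expand s]
    exact Submodule.sum_mem _ fun i _ =>
      Submodule.smul_mem_smul ⟨_, (htr _).symm⟩ Submodule.mem_top
  obtain ⟨r, hr1, hr0⟩ := Submodule.exists_sub_one_mem_and_smul_eq_zero_of_fg_of_le_smul I ⊤
    ⟨_, eq_top_iff.2 fun s _ => mem_span s⟩ fun s _ => mem_smul s
  have hr : r ∈ I := ⟨0, by simpa [Algebra.algebraMap_eq_smul_one] using (hr0 1 trivial).symm⟩
  obtain ⟨c, hc⟩ := by simpa using I.sub_mem hr hr1
  exact ⟨c, by simpa using hc⟩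

lemma bijective_galoisMap_baseChangeAction [Finite G] (hGal : IsGaloisExtension R S G ρ) :
    Function.Bijective (galoisMap T (T ⊗[R] S) G (baseChangeAction R S G T ρ)) := by
  classical
  have := Fintype.ofFinite G
  rw [← EquivLike.bijective_comp (TensorProduct.AlgebraTensorModule.distribBaseChange R T S S)]
  let e := LinearEquiv.ofBijective (galoisMap R S G ρ).toLinearMap hGal.bijective
  have h := (Algebra.TensorProduct.piRight R T T (fun _ : G => S)).bijective.comp
    (e.baseChange R T _ _).bijective
  convert h using 1
  funext x
  exact galoisMap_baseChangeAction_distribBaseChange T ρ x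

lemma exists_algebraMap_eq_galoisTrace_baseChangeAction [Fintype G]
    (hGal : IsGaloisExtension R S G ρ) (x : T ⊗[R] S) :
    ∃ t : T, algebraMap T (T ⊗[R] S) t = galoisTrace (baseChangeAction R S G T ρ) x := by
  induction x with
  | zero => exact ⟨0, by simp⟩
  | tmul t s =>
    obtain ⟨r, hr⟩ := hGal.exists_algebraMap_eq_galoisTrace s
    refine ⟨r • t, ?_⟩
    rw [galoisTrace_baseChangeAction_tmul, ← hr, Algebra.algebraMap_eq_smul_one r,
      ← TensorProduct.smul_tmul, Algebra.TensorProduct.algebraMap_apply]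
    rfl
  | add x y hx hy =>
    obtain ⟨t, ht⟩ := hx
    obtain ⟨t', ht'⟩ := hy
    exact ⟨t + t', by rw [map_add, map_add, ht, ht']⟩

end IsGaloisExtension

end

/-- base change of a `G`-Galois extension along `R → T` is `G`-Galois. -/
theorem galois_base_change (R S G T : Type*) [CommRing R] [CommRing S] [Algebra R S]
    [Group G] [Finite G] [CommRing T] [Algebra R T] (ρ : G →* (S ≃ₐ[R] S))
    (hGal : IsGaloisExtension R S G ρ) :
    IsGaloisExtension T (TensorProduct R T S) G (baseChangeAction R S G T ρ) := by
  classical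
  have := Fintype.ofFinite G
  obtain ⟨c, hc⟩ := hGal.exists_galoisTrace_eq_one
  have hc' : galoisTrace (baseChangeAction R S G T ρ) (1 ⊗ₜ c) = 1 := by
    rw [galoisTrace_baseChangeAction_tmul, hc, Algebra.TensorProduct.one_def]
  exact ⟨fun x hx => exists_algebraMap_eq_of_forall_map_eq _ hc'
      (hGal.exists_algebraMap_eq_galoisTrace_baseChangeAction T) hx,
    hGal.bijective_galoisMap_baseChangeAction T⟩
end

section
/- Let R → S be a G-Galois extension of commutative rings with G finite and let I ◁ R be an ideal. Then (R/I) → (S/SI) is a G-Galois extension. -/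
open scoped TensorProduct

/-- The induced `G`-action on `S ⧸ IS`, as `(R ⧸ I)`-algebra automorphisms. -/
noncomputable def quotGaloisAction (R S G : Type*) [CommRing R] [CommRing S] [Algebra R S]
    [Group G] (ρ : G →* (S ≃ₐ[R] S)) (I : Ideal R) :
    G →* ((S ⧸ Ideal.map (algebraMap R S) I) ≃ₐ[R ⧸ I]
      (S ⧸ Ideal.map (algebraMap R S) I)) where
  toFun g := AlgEquiv.ofRingEquiv
    (f := Ideal.quotientEquiv (Ideal.map (algebraMap R S) I) (Ideal.map (algebraMap R S) I)
      (ρ g).toRingEquiv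
      (by rw [Ideal.map_map]; congr 1; ext r; simp))
    (by
      intro x
      obtain ⟨r, rfl⟩ := Ideal.Quotient.mk_surjective x
      show _ = Ideal.quotientMap _ (algebraMap R S) Ideal.le_comap_map _
      simp [Ideal.quotientEquiv_mk, Ideal.quotientMap_mk])
  map_one' := by
    apply AlgEquiv.ext
    intro x
    obtain ⟨s, rfl⟩ := Ideal.Quotient.mk_surjective x
    simp [Ideal.quotientEquiv_mk]
  map_mul' g₁ g₂ := by
    apply AlgEquiv.ext
    intro x
    obtain ⟨s, rfl⟩ := Ideal.Quotient.mk_surjective x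
    simp [Ideal.quotientEquiv_mk]

section Aux
variable {R S G : Type*} [CommRing R] [CommRing S] [Algebra R S] [Group G]
  (ρ : G →* (S ≃ₐ[R] S)) (I : Ideal R)

theorem galoisMap_tmul (x y : S) (g : G) :
    galoisMap R S G ρ (x ⊗ₜ[R] y) g = x * ρ g y := rfl

/-- The quotient map on tensor squares. -/
noncomputable def galQ : TensorProduct R S S →ₐ[R]
    ((S ⧸ Ideal.map (algebraMap R S) I) ⊗[R ⧸ I] (S ⧸ Ideal.map (algebraMap R S) I)) :=
  Algebra.TensorProduct.lift
    (((Algebra.TensorProduct.includeLeft :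
        (S ⧸ Ideal.map (algebraMap R S) I) →ₐ[R ⧸ I] _).restrictScalars R).comp
      (Ideal.Quotient.mkₐ R _))
    ((((Algebra.TensorProduct.includeRight :
        (S ⧸ Ideal.map (algebraMap R S) I) →ₐ[R ⧸ I] _)).restrictScalars R).comp
      (Ideal.Quotient.mkₐ R _))
    (fun _ _ => Commute.all _ _)

theorem galQ_tmul (x y : S) :
    galQ (S := S) I (x ⊗ₜ[R] y) =
      (Ideal.Quotient.mk (Ideal.map (algebraMap R S) I) x) ⊗ₜ[R ⧸ I]
        (Ideal.Quotient.mk (Ideal.map (algebraMap R S) I) y) := by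
  simp only [galQ, Algebra.TensorProduct.lift_tmul, AlgHom.coe_comp, AlgHom.coe_restrictScalars',
    Function.comp_apply, Ideal.Quotient.mkₐ_eq_mk, Algebra.TensorProduct.includeLeft_apply,
    Algebra.TensorProduct.includeRight_apply, Algebra.TensorProduct.tmul_mul_tmul, one_mul,
    mul_one]

theorem quotGaloisAction_mk (g : G) (s : S) :
    quotGaloisAction R S G ρ I g (Ideal.Quotient.mk (Ideal.map (algebraMap R S) I) s)
      = Ideal.Quotient.mk (Ideal.map (algebraMap R S) I) (ρ g s) := by
  simp [quotGaloisAction, Ideal.quotientEquiv_mk]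

theorem galoisMap_quot_comm (z : TensorProduct R S S) (g : G) :
    galoisMap (R ⧸ I) (S ⧸ Ideal.map (algebraMap R S) I) G (quotGaloisAction R S G ρ I)
      (galQ (S := S) I z) g
    = Ideal.Quotient.mk (Ideal.map (algebraMap R S) I) (galoisMap R S G ρ z g) := by
  induction z using TensorProduct.induction_on with
  | zero => simp
  | tmul x y =>
      rw [galQ_tmul, galoisMap_tmul, galoisMap_tmul, quotGaloisAction_mk, map_mul]
  | add a b ha hb => simp [map_add, Pi.add_apply, ha, hb]

theorem galQ_surjective : Function.Surjective (galQ (S := S) I) := by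
  intro w
  induction w using TensorProduct.induction_on with
  | zero => exact ⟨0, map_zero _⟩
  | tmul x y =>
      obtain ⟨a, rfl⟩ := Ideal.Quotient.mk_surjective x
      obtain ⟨b, rfl⟩ := Ideal.Quotient.mk_surjective y
      exact ⟨a ⊗ₜ b, galQ_tmul I a b⟩
  | add a b ha hb =>
      obtain ⟨za, hza⟩ := ha
      obtain ⟨zb, hzb⟩ := hb
      exact ⟨za + zb, by rw [map_add, hza, hzb]⟩

theorem galQ_smul_eq_zero {i : R} (hi : i ∈ I) (t : TensorProduct R S S) :
    galQ (S := S) I (i • t) = 0 := by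
  rw [map_smul, ← algebraMap_smul (R ⧸ I) i,
    show algebraMap R (R ⧸ I) i = 0 from Ideal.Quotient.eq_zero_iff_mem.mpr hi, zero_smul]

theorem tr_fixed [Fintype G] (s : S) (g' : G) :
    ρ g' (∑ g : G, ρ g s) = ∑ g : G, ρ g s := by
  rw [map_sum]
  exact Fintype.sum_equiv (Equiv.mulLeft g') _ _ (fun g => by
    simp [Equiv.coe_mulLeft, map_mul, AlgEquiv.mul_apply])

end Aux

/-- a `G`-Galois extension `S/R` induces a `G`-Galois extension
`(S/IS)/(R/I)` for every ideal `I ◁ R`. -/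
theorem galois_quotient (R S G : Type*) [CommRing R] [CommRing S] [Algebra R S]
    [Group G] [Finite G] (ρ : G →* (S ≃ₐ[R] S))
    (hGal : IsGaloisExtension R S G ρ) (I : Ideal R) :
    IsGaloisExtension (R ⧸ I) (S ⧸ Ideal.map (algebraMap R S) I) G
      (quotGaloisAction R S G ρ I) := by
  classical
  have : Fintype G := Fintype.ofFinite G
  -- a "dual basis" coming from surjectivity of the Galois map
  obtain ⟨z₀, hz₀⟩ := hGal.bijective.2 (Pi.single (1 : G) (1 : S))
  obtain ⟨F, hF⟩ := TensorProduct.exists_finset z₀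
  have hdelta : ∀ g : G, (∑ p ∈ F, p.1 * ρ g p.2) = (Pi.single (1 : G) (1 : S) : G → S) g := by
    intro g
    have := congrFun hz₀ g
    rw [hF, map_sum] at this
    simpa [galoisMap_tmul, Finset.sum_apply] using this
  have key : ∀ t : S, (∑ p ∈ F, p.1 * (∑ g : G, ρ g (p.2 * t))) = t := by
    intro t
    have step1 : ∀ p : S × S, p.1 * (∑ g : G, ρ g (p.2 * t))
        = ∑ g : G, (p.1 * ρ g p.2) * ρ g t := by
      intro p
      rw [Finset.mul_sum]
      exact Finset.sum_congr rfl fun g _ => by rw [map_mul, mul_assoc]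
    rw [Finset.sum_congr rfl fun p _ => step1 p, Finset.sum_comm]
    have step2 : ∀ g : G, (∑ p ∈ F, (p.1 * ρ g p.2) * ρ g t)
        = (Pi.single (1 : G) (1 : S) : G → S) g * ρ g t := by
      intro g
      rw [← Finset.sum_mul, hdelta]
    rw [Finset.sum_congr rfl fun g _ => step2 g,
      Finset.sum_eq_single (1 : G)
        (fun g _ hg => by rw [Pi.single_eq_of_ne hg, zero_mul])
        (fun h => absurd (Finset.mem_univ _) h)]
    simp
  -- the trace, and surjectivity of the trace
  have tr_inJ : ∀ s : S, ∃ r : R, algebraMap R S r = ∑ g : G, ρ g s :=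
    fun s => hGal.fixed _ (tr_fixed ρ s)
  set J : Ideal R := Submodule.comap (Algebra.linearMap R S)
    (LinearMap.range (∑ g : G, (ρ g).toLinearMap)) with hJdef
  have trL_apply : ∀ s : S, (∑ g : G, (ρ g).toLinearMap) s = ∑ g : G, ρ g s := by
    intro s; simp [LinearMap.sum_apply]
  have memJ : ∀ r : R, (∃ s : S, algebraMap R S r = ∑ g : G, ρ g s) → r ∈ J := by
    intro r ⟨s, hs⟩
    refine Submodule.mem_comap.mpr ⟨s, ?_⟩
    rw [trL_apply]
    exact hs.symm
  have span_top : ∀ s : S, ∃ c : S × S → R, (∀ p, c p ∈ J) ∧ s = ∑ p ∈ F, c p • p.1 := by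
    intro s
    choose r hr using fun p : S × S => tr_inJ (p.2 * s)
    refine ⟨r, fun p => memJ _ ⟨p.2 * s, hr p⟩, ?_⟩
    conv_lhs => rw [← key s]
    exact Finset.sum_congr rfl fun p _ => by rw [Algebra.smul_def, hr, mul_comm]
  have fg_top : (⊤ : Submodule R S).FG := by
    refine ⟨F.image Prod.fst, eq_top_iff.mpr fun s _ => ?_⟩
    obtain ⟨c, _, hc⟩ := span_top s
    rw [hc]
    exact Submodule.sum_mem _ fun p hp => Submodule.smul_mem _ _
      (Submodule.subset_span (Finset.mem_coe.mpr (Finset.mem_image_of_mem Prod.fst hp)))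
  have le_smul : (⊤ : Submodule R S) ≤ J • ⊤ := by
    intro s _
    obtain ⟨c, hcJ, hc⟩ := span_top s
    rw [hc]
    exact Submodule.sum_mem _ fun p _ => Submodule.smul_mem_smul (hcJ p) trivial
  obtain ⟨r, hr1, hr0⟩ :=
    Submodule.exists_sub_one_mem_and_smul_eq_zero_of_fg_of_le_smul J ⊤ fg_top le_smul
  have halgr : algebraMap R S r = 0 := by
    have := hr0 1 trivial
    rwa [Algebra.smul_def, mul_one] at this
  obtain ⟨c, hc⟩ := Submodule.mem_comap.mp hr1
  have hc' : ∑ g : G, ρ g (-c) = (1 : S) := by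
    have : (∑ g : G, (ρ g).toLinearMap) c = algebraMap R S (r - 1) := hc
    rw [trL_apply] at this
    have : ∑ g : G, ρ g c = -1 := by
      rw [this, map_sub, halgr, map_one, zero_sub]
    simp [map_neg, Finset.sum_neg_distrib, this]
  constructor
  · -- fixed points
    intro s' hs'
    obtain ⟨s, rfl⟩ := Ideal.Quotient.mk_surjective s'
    have hdiff : ∀ g : G, ρ g s - s ∈ Ideal.map (algebraMap R S) I := by
      intro g
      have := hs' g
      rw [quotGaloisAction_mk] at this
      exact (Ideal.Quotient.mk_eq_mk_iff_sub_mem _ _).mp this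
    obtain ⟨r₀, hr₀⟩ := hGal.fixed (∑ g : G, ρ g ((-c) * s)) (tr_fixed ρ _)
    refine ⟨Ideal.Quotient.mk I r₀, ?_⟩
    rw [Ideal.Quotient.algebraMap_quotient_map_quotient, hr₀,
      Ideal.Quotient.mk_eq_mk_iff_sub_mem]
    have expand : (∑ g : G, ρ g ((-c) * s)) - s = ∑ g : G, ρ g (-c) * (ρ g s - s) := by
      calc (∑ g : G, ρ g ((-c) * s)) - s
          = (∑ g : G, ρ g (-c) * ρ g s) - (∑ g : G, ρ g (-c)) * s := by
            rw [hc', one_mul]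
            congr 1
            exact Finset.sum_congr rfl fun g _ => by rw [map_mul]
        _ = ∑ g : G, (ρ g (-c) * ρ g s - ρ g (-c) * s) := by
            rw [Finset.sum_sub_distrib, Finset.sum_mul]
        _ = ∑ g : G, ρ g (-c) * (ρ g s - s) := by
            exact Finset.sum_congr rfl fun g _ => (mul_sub _ _ _).symm
    rw [expand]
    exact Ideal.sum_mem _ fun g _ => Ideal.mul_mem_left _ _ (hdiff g)
  · -- bijectivity
    have comm := galoisMap_quot_comm ρ I
    constructor
    · -- injectivity
      have hker : ∀ w, galoisMap (R ⧸ I) (S ⧸ Ideal.map (algebraMap R S) I) G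
          (quotGaloisAction R S G ρ I) w = 0 → w = 0 := by
        intro w hw
        obtain ⟨z, rfl⟩ := galQ_surjective I w
        have hmem : ∀ g : G, galoisMap R S G ρ z g ∈ Ideal.map (algebraMap R S) I := by
          intro g
          have := congrFun hw g
          rw [comm z g] at this
          exact Ideal.Quotient.eq_zero_iff_mem.mp this
        have h1 : galoisMap R S G ρ z ∈ I • (⊤ : Submodule R (G → S)) := by
          rw [← Finset.univ_sum_single (galoisMap R S G ρ z)]
          refine Submodule.sum_mem _ fun g _ => ?_
          have hg : galoisMap R S G ρ z g ∈ I • (⊤ : Submodule R S) := by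
            rw [Ideal.smul_top_eq_map]
            exact hmem g
          have hmap := Submodule.mem_map_of_mem
            (f := LinearMap.single R (fun _ : G => S) g) hg
          rw [Submodule.map_smul''] at hmap
          exact Submodule.smul_mono le_rfl le_top hmap
        have h2 : z ∈ I • (⊤ : Submodule R (TensorProduct R S S)) := by
          have heq : I • (⊤ : Submodule R (G → S))
              = Submodule.map (galoisMap R S G ρ).toLinearMap (I • ⊤) := by
            have hrt : LinearMap.range (galoisMap R S G ρ).toLinearMap = ⊤ :=
              LinearMap.range_eq_top.mpr hGal.bijective.2
            rw [Submodule.map_smul'', Submodule.map_top, hrt]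
          rw [heq] at h1
          obtain ⟨z', hz'm, hz'e⟩ := h1
          have : z' = z := hGal.bijective.1 hz'e
          rwa [← this]
        exact Submodule.smul_induction_on h2
          (fun i hi t _ => galQ_smul_eq_zero I hi t)
          (fun x y hx hy => by rw [map_add, hx, hy, add_zero])
      intro a b hab
      have : a - b = 0 := hker _ (by rw [map_sub, hab, sub_self])
      exact sub_eq_zero.mp this
    · -- surjectivity
      intro f
      obtain ⟨z, hz⟩ := hGal.bijective.2
        (fun g => (Ideal.Quotient.mk_surjective (f g)).choose)
      exact ⟨galQ (S := S) I z, funext fun g => by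
        rw [comm z g, congrFun hz g]
        exact (Ideal.Quotient.mk_surjective (f g)).choose_spec⟩
end

section
/- Let A be a separable algebra over a commutative ring R. Then every A-module that is projective as an R-module is projective as an A-module. -/
open scoped TensorProduct

/-- if `A` is a separable `R`-algebra (there is a separability idempotent
`e = Σ aᵢ ⊗ bᵢ ∈ A ⊗[R] A` with `Σ aᵢbᵢ = 1` and `Σ a·aᵢ ⊗ bᵢ = Σ aᵢ ⊗ bᵢ·a` for all
`a`), then every `A`-module that is projective over `R` is projective over `A`. -/
theorem separable_projective_descent (R A : Type*) [CommRing R] [Ring A] [Algebra R A]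
    (e : A ⊗[R] A)
    (he₁ : LinearMap.mul' R A e = 1)
    (he₂ : ∀ a : A,
      LinearMap.rTensor A (LinearMap.mulLeft R a) e =
        LinearMap.lTensor A (LinearMap.mulRight R a) e)
    (M : Type*) [AddCommGroup M] [Module R M] [Module A M] [IsScalarTower R A M]
    (hM : Module.Projective R M) :
    Module.Projective A M := by
  classical
  -- the R-linear action map π₀ : A ⊗[R] M → M
  let π₀ : A ⊗[R] M →ₗ[R] M :=
    TensorProduct.lift ((Algebra.lsmul R R M : A →ₐ[R] Module.End R M)).toLinearMap
  -- it is in fact A-linear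
  let π : A ⊗[R] M →ₗ[A] M :=
    { toFun := π₀
      map_add' := π₀.map_add
      map_smul' := fun a x => by
        simp only [RingHom.id_apply]
        induction x using TensorProduct.induction_on with
        | zero => simp
        | tmul p q =>
            rw [TensorProduct.smul_tmul']
            simp only [π₀, TensorProduct.lift.tmul, AlgHom.toLinearMap_apply,
              Algebra.lsmul_coe, smul_eq_mul, mul_smul]
        | add x y hx hy => rw [smul_add, map_add, map_add, hx, hy, smul_add] }
  have hπeq : ∀ x : A ⊗[R] M, π x = π₀ x := fun x => rfl
  -- auxiliary: for x = Σ xᵢ ⊗ yᵢ ∈ A ⊗ A and m ∈ M, σf x m = Σ xᵢ ⊗ (yᵢ • m)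
  let σf : A ⊗[R] A → M → A ⊗[R] M := fun x m =>
    LinearMap.lTensor A π₀ ((TensorProduct.assoc R A A M) (x ⊗ₜ[R] m))
  have hπ₀ : ∀ (q : A) (m : M), π₀ (q ⊗ₜ[R] m) = q • m := fun q m => by
    simp [π₀]
  have hσtmul : ∀ (p q : A) (m : M), σf (p ⊗ₜ[R] q) m = p ⊗ₜ[R] (q • m) := by
    intro p q m
    simp only [σf, TensorProduct.assoc_tmul, LinearMap.lTensor_tmul, hπ₀]
  have ha : ∀ (a : A) (x : A ⊗[R] A) (m : M),
      σf x (a • m) = σf (LinearMap.lTensor A (LinearMap.mulRight R a) x) m := by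
    intro a x m
    induction x using TensorProduct.induction_on with
    | zero => simp [σf]
    | tmul p q =>
        rw [hσtmul, LinearMap.lTensor_tmul, hσtmul]
        simp [mul_smul]
    | add x y hx hy =>
        simp only [σf, map_add, TensorProduct.add_tmul] at *
        rw [hx, hy]
  have hb : ∀ (a : A) (x : A ⊗[R] A) (m : M),
      a • σf x m = σf (LinearMap.rTensor A (LinearMap.mulLeft R a) x) m := by
    intro a x m
    induction x using TensorProduct.induction_on with
    | zero => simp [σf]
    | tmul p q =>
        rw [hσtmul, LinearMap.rTensor_tmul, hσtmul]
        rw [TensorProduct.smul_tmul']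
        simp [smul_eq_mul]
    | add x y hx hy =>
        simp only [σf, map_add, TensorProduct.add_tmul, smul_add] at *
        rw [hx, hy]
  have hc : ∀ (x : A ⊗[R] A) (m : M), π (σf x m) = (LinearMap.mul' R A x) • m := by
    intro x m
    induction x using TensorProduct.induction_on with
    | zero => simp [σf]
    | tmul p q =>
        rw [hσtmul]
        rw [hπeq, hπ₀, LinearMap.mul'_apply, mul_smul]
    | add x y hx hy =>
        simp only [σf, map_add, TensorProduct.add_tmul, add_smul] at *
        rw [hx, hy]
  -- the A-linear section σ : M → A ⊗[R] M
  let σ : M →ₗ[A] A ⊗[R] M :=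
    { toFun := fun m => σf e m
      map_add' := fun m m' => by
        simp only [σf, TensorProduct.tmul_add, map_add]
      map_smul' := fun a m => by
        simp only [RingHom.id_apply]
        rw [ha a e m, ← he₂ a, ← hb a e m] }
  haveI : Module.Projective A (A ⊗[R] M) := inferInstance
  refine Module.Projective.of_split σ π ?_
  ext m
  show π (σf e m) = m
  rw [hc e m, he₁, one_smul]
end
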